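/- Let C ⊆ ℝ^2 be a compact convex two-dimensional set and w an extreme point of C. Then for every ε > 0 there exists a boundary point v of C with ‖w − v‖ < ε such that the segment joining w and v does not lie entirely on the boundary of C, unless C is locally a polytope at w. -/

import Mathlib

/-- `C` is locally a polytope at `w` if on some open neighborhood `U` of `w`, the set `C`
agrees with a finite intersection of closed half-planes. -/
def IsLocallyPolytopeAt (C : Set (Fin 2 → ℝ)) (w : Fin 2 → ℝ) : Prop :=
  ∃ U : Set (Fin 2 → ℝ), IsOpen U ∧ w ∈ U ∧
    ∃ (s : ℕ) (a : Fin s → Fin 2 → ℝ) (c : Fin s → ℝ),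
      C ∩ U = (⋂ i, {x : Fin 2 → ℝ | c i ≤ ∑ j, a i j * x j}) ∩ U


open Set

private lemma mem_closure_int (C : Set (Fin 2 → ℝ)) (hconv : Convex ℝ C)
    (hdim : (interior C).Nonempty) {x : Fin 2 → ℝ} (hx : x ∈ C) :
    x ∈ closure (interior C) := by
  obtain ⟨z, hz⟩ := hdim
  have h1 : Filter.Tendsto (fun n : ℕ => 1 / ((n : ℝ) + 1)) Filter.atTop (nhds 0) :=
    tendsto_one_div_add_atTop_nhds_zero_nat
  have h2 : Filter.Tendsto (fun n : ℕ => x + (1 / ((n : ℝ) + 1)) • (z - x)) Filter.atTop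
      (nhds (x + (0 : ℝ) • (z - x))) :=
    Filter.Tendsto.add tendsto_const_nhds (h1.smul_const _)
  simp only [zero_smul, add_zero] at h2
  refine mem_closure_of_tendsto h2 (Filter.Eventually.of_forall fun n => ?_)
  refine hconv.add_smul_sub_mem_interior hx hz ⟨by positivity, ?_⟩
  rw [div_le_one (by positivity)]
  linarith [Nat.cast_nonneg (α := ℝ) n]

private lemma cross_frontier (C : Set (Fin 2 → ℝ)) (hcl : IsClosed C) {z x : Fin 2 → ℝ}
    (hz : z ∈ C) (hx : x ∉ C) :
    ∃ t : ℝ, 0 ≤ t ∧ t < 1 ∧ z + t • (x - z) ∈ frontier C := by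
  set γ : ℝ → (Fin 2 → ℝ) := fun t => z + t • (x - z) with hγ
  have hcont : Continuous γ := by
    apply continuous_const.add
    exact continuous_id.smul continuous_const
  set S : Set ℝ := Icc (0:ℝ) 1 ∩ γ ⁻¹' C with hS
  have hSne : S.Nonempty := ⟨0, ⟨le_refl _, zero_le_one⟩, by simp [hγ, hz]⟩
  have hSbdd : BddAbove S := ⟨1, fun t ht => ht.1.2⟩
  have hSclosed : IsClosed S := (isClosed_Icc).inter (hcl.preimage hcont)
  set t₀ := sSup S with ht₀
  have htS : t₀ ∈ S := hSclosed.csSup_mem hSne hSbdd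
  have ht1 : t₀ ≠ 1 := by
    intro h
    apply hx
    have := htS.2
    simp only [mem_preimage, hγ, h] at this
    simpa using this
  have ht01 : t₀ < 1 := lt_of_le_of_ne htS.1.2 ht1
  refine ⟨t₀, htS.1.1, ht01, ?_⟩
  rw [hcl.frontier_eq]
  refine ⟨htS.2, ?_⟩
  intro hint
  obtain ⟨δ, hδ, hball⟩ := Metric.isOpen_iff.1 isOpen_interior (γ t₀) hint
  have hcont' : ContinuousAt γ t₀ := hcont.continuousAt
  rw [Metric.continuousAt_iff] at hcont'
  obtain ⟨η, hη, hηball⟩ := hcont' δ hδ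
  set t₁ := min 1 (t₀ + η / 2) with ht₁
  have htt : t₀ < t₁ := lt_min ht01 (by linarith)
  have h1 : t₁ ∈ S := by
    constructor
    · exact ⟨le_trans htS.1.1 htt.le, min_le_left _ _⟩
    · have : dist t₁ t₀ < η := by
        rw [Real.dist_eq, abs_of_pos (by linarith)]
        have : t₁ ≤ t₀ + η / 2 := min_le_right _ _
        linarith
      have := hηball this
      exact Set.mem_preimage.2 (interior_subset (hball this))
  exact absurd (le_csSup hSbdd h1) (not_le.2 htt)

private lemma support_fun (C : Set (Fin 2 → ℝ)) (hconv : Convex ℝ C)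
    (hdim : (interior C).Nonempty) {m : Fin 2 → ℝ} (hm : m ∉ interior C) :
    ∃ f : (Fin 2 → ℝ) →L[ℝ] ℝ, (∀ x ∈ interior C, f x < f m) ∧ ∀ x ∈ C, f x ≤ f m := by
  obtain ⟨f, hf⟩ := geometric_hahn_banach_open_point hconv.interior isOpen_interior hm
  refine ⟨f, hf, fun x hx => ?_⟩
  have h1 : closure (interior C) ⊆ {y | f y ≤ f m} :=
    closure_minimal (fun y hy => (hf y hy).le)
      (isClosed_le f.continuous continuous_const)
  exact h1 (mem_closure_int C hconv hdim hx)

private lemma pt_interior_triangle (C : Set (Fin 2 → ℝ)) (hconv : Convex ℝ C)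
    (w u1 u2 : Fin 2 → ℝ) (h0 : w ∈ C) (h1 : w + u1 ∈ C) (h2 : w + u2 ∈ C)
    (hdet : u1 0 * u2 1 - u1 1 * u2 0 ≠ 0) {a b : ℝ} (ha : 0 < a) (hb : 0 < b) :
    ∃ t : ℝ, 0 < t ∧ t ≤ 1 ∧ w + t • (a • u1 + b • u2) ∈ interior C := by
  set δ := u1 0 * u2 1 - u1 1 * u2 0 with hδ
  set c1 : (Fin 2 → ℝ) → ℝ := fun x => ((x 0 - w 0) * u2 1 - (x 1 - w 1) * u2 0) / δ with hc1
  set c2 : (Fin 2 → ℝ) → ℝ := fun x => (u1 0 * (x 1 - w 1) - u1 1 * (x 0 - w 0)) / δ with hc2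
  have hc1cont : Continuous c1 := by
    apply Continuous.div_const
    exact (((continuous_apply 0).sub continuous_const).mul continuous_const).sub
      (((continuous_apply 1).sub continuous_const).mul continuous_const)
  have hc2cont : Continuous c2 := by
    apply Continuous.div_const
    exact ((continuous_const.mul ((continuous_apply 1).sub continuous_const))).sub
      (continuous_const.mul ((continuous_apply 0).sub continuous_const))
  set V : Set (Fin 2 → ℝ) := {x | 0 < c1 x ∧ 0 < c2 x ∧ c1 x + c2 x < 1} with hV
  have hVopen : IsOpen V := by
    have e1 : IsOpen {x : Fin 2 → ℝ | 0 < c1 x} := isOpen_lt continuous_const hc1cont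
    have e2 : IsOpen {x : Fin 2 → ℝ | 0 < c2 x} := isOpen_lt continuous_const hc2cont
    have e3 : IsOpen {x : Fin 2 → ℝ | c1 x + c2 x < 1} :=
      isOpen_lt (hc1cont.add hc2cont) continuous_const
    have : V = {x : Fin 2 → ℝ | 0 < c1 x} ∩ ({x | 0 < c2 x} ∩ {x | c1 x + c2 x < 1}) := by
      ext x; simp [hV, and_assoc]
    rw [this]
    exact e1.inter (e2.inter e3)
  have hVsub : V ⊆ C := by
    rintro x ⟨hx1, hx2, hx3⟩
    have hxeq : x = (1 - (c1 x + c2 x)) • w + (c1 x) • (w + u1) + (c2 x) • (w + u2) := by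
      funext i
      have h0' : (u1 0 * u2 1 - u1 1 * u2 0) ≠ 0 := hδ ▸ hdet
      simp only [Pi.add_apply, Pi.smul_apply, smul_eq_mul, hc1, hc2]
      fin_cases i <;> simp only [Fin.zero_eta, Fin.mk_one] <;> field_simp <;> ring
    have hsum : (c1 x) / (c1 x + c2 x) + (c2 x) / (c1 x + c2 x) = 1 := by
      field_simp
    have hy : ((c1 x) / (c1 x + c2 x)) • (w + u1) + ((c2 x) / (c1 x + c2 x)) • (w + u2) ∈ C :=
      hconv h1 h2 (by positivity) (by positivity) hsum
    have hfin := hconv h0 hy (a := 1 - (c1 x + c2 x)) (b := c1 x + c2 x)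
      (by linarith) (by positivity) (by ring)
    have hne : c1 x + c2 x ≠ 0 := by positivity
    have hco1 : (c1 x + c2 x) * (c1 x / (c1 x + c2 x)) = c1 x := by field_simp
    have hco2 : (c1 x + c2 x) * (c2 x / (c1 x + c2 x)) = c2 x := by field_simp
    rw [smul_add, smul_smul, smul_smul, hco1, hco2, ← add_assoc] at hfin
    rw [hxeq]
    exact hfin
  set t := min 1 (1 / (a + b + 1)) with htdef
  have ht0 : 0 < t := lt_min one_pos (by positivity)
  have ht1 : t ≤ 1 := min_le_left _ _
  refine ⟨t, ht0, ht1, ?_⟩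
  have hq : w + t • (a • u1 + b • u2) ∈ V := by
    have hA : c1 (w + t • (a • u1 + b • u2)) = t * a := by
      simp only [hc1, Pi.add_apply, Pi.smul_apply, smul_eq_mul]
      field_simp
      ring
    have hB : c2 (w + t • (a • u1 + b • u2)) = t * b := by
      simp only [hc2, Pi.add_apply, Pi.smul_apply, smul_eq_mul]
      field_simp
      ring
    have htab : t * (a + b) < 1 := by
      have h3 : t ≤ 1 / (a + b + 1) := min_le_right _ _
      have : t * (a + b) ≤ (1 / (a + b + 1)) * (a + b) := by
        apply mul_le_mul_of_nonneg_right h3 (by positivity)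
      have h4 : (1 / (a + b + 1)) * (a + b) < 1 := by
        rw [div_mul_eq_mul_div, div_lt_one (by positivity)]
        linarith
      linarith
    refine ⟨?_, ?_, ?_⟩
    · rw [hA]; positivity
    · rw [hB]; positivity
    · rw [hA, hB]; nlinarith
  exact interior_maximal hVsub hVopen hq

/-- supporting functional along a frontier segment from `w` to `v`. -/
private lemma seg_support (C : Set (Fin 2 → ℝ)) (hconv : Convex ℝ C)
    (hdim : (interior C).Nonempty) (hcl : IsClosed C)
    {w v : Fin 2 → ℝ} (hwC : w ∈ C) (hvC : v ∈ C)
    (hsegfr : segment ℝ w v ⊆ frontier C) :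
    ∃ f : (Fin 2 → ℝ) →L[ℝ] ℝ,
      (∀ x ∈ interior C, f x < f w) ∧ (∀ x ∈ C, f x ≤ f w) ∧ f (v - w) = 0 := by
  set m := w + (1/2 : ℝ) • (v - w) with hm
  have hmseg : m ∈ segment ℝ w v := by
    refine ⟨1/2, 1/2, by norm_num, by norm_num, by norm_num, ?_⟩
    rw [hm]; module
  have hmfr : m ∈ frontier C := hsegfr hmseg
  have hmni : m ∉ interior C := by
    rw [hcl.frontier_eq] at hmfr; exact hmfr.2
  obtain ⟨f, hfi, hfc⟩ := support_fun C hconv hdim hmni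
  have hfm : f m = f w + (1/2 : ℝ) * f (v - w) := by
    rw [hm]; simp
  have h1 : f w ≤ f m := hfc w hwC
  have h2 : f v ≤ f m := hfc v hvC
  have hfv : f v = f w + f (v - w) := by
    have : f (v - w) = f v - f w := by simp
    linarith
  have hzero : f (v - w) = 0 := by linarith
  have hfmw : f m = f w := by rw [hfm, hzero]; ring
  exact ⟨f, fun x hx => hfmw ▸ hfi x hx, fun x hx => hfmw ▸ hfc x hx, hzero⟩


private lemma build_polytope (C : Set (Fin 2 → ℝ)) (hC : IsCompact C) (hconv : Convex ℝ C)
    (hdim : (interior C).Nonempty) (w : Fin 2 → ℝ) (hwC : w ∈ C) {ε : ℝ} (hε : 0 < ε)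
    (f1 f2 : (Fin 2 → ℝ) →L[ℝ] ℝ)
    (h1i : ∀ x ∈ interior C, f1 x < f1 w) (h1c : ∀ x ∈ C, f1 x ≤ f1 w)
    (h2i : ∀ x ∈ interior C, f2 x < f2 w) (h2c : ∀ x ∈ C, f2 x ≤ f2 w)
    (hkey : ∀ p ∈ frontier C, ‖w - p‖ < ε → f1 p = f1 w ∨ f2 p = f2 w) :
    IsLocallyPolytopeAt C w := by
  have hform : ∀ (f : (Fin 2 → ℝ) →L[ℝ] ℝ) (x : Fin 2 → ℝ),
      (∑ j, -(f (fun k => if j = k then (1:ℝ) else 0)) * x j) = -(f x) := by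
    intro f x
    have hlin := LinearMap.pi_apply_eq_sum_univ
      (f : (Fin 2 → ℝ) →ₗ[ℝ] ℝ) x
    simp only [ContinuousLinearMap.coe_coe] at hlin
    rw [hlin, ← Finset.sum_neg_distrib]
    exact Finset.sum_congr rfl fun j _ => by rw [smul_eq_mul]; ring
  classical
  refine ⟨Metric.ball w ε, Metric.isOpen_ball, Metric.mem_ball_self hε, 2,
    ![fun j => -(f1 (fun k => if j = k then (1:ℝ) else 0)),
      fun j => -(f2 (fun k => if j = k then (1:ℝ) else 0))],
    ![-(f1 w), -(f2 w)], ?_⟩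
  have hmem : ∀ x : Fin 2 → ℝ,
      (x ∈ ⋂ i, {y : Fin 2 → ℝ |
        (![-(f1 w), -(f2 w)] : Fin 2 → ℝ) i ≤ ∑ j,
          (![fun j => -(f1 (fun k => if j = k then (1:ℝ) else 0)),
             fun j => -(f2 (fun k => if j = k then (1:ℝ) else 0))] : Fin 2 → Fin 2 → ℝ) i j * y j})
      ↔ (f1 x ≤ f1 w ∧ f2 x ≤ f2 w) := by
    intro x
    rw [Set.mem_iInter, Fin.forall_fin_two]
    simp only [Matrix.cons_val_zero, Matrix.cons_val_one, Matrix.head_cons,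
      Set.mem_setOf_eq, hform]
    constructor <;> rintro ⟨ha, hb⟩ <;> constructor <;> linarith
  ext x
  simp only [Set.mem_inter_iff]
  constructor
  · rintro ⟨hxC, hxU⟩
    exact ⟨(hmem x).2 ⟨h1c x hxC, h2c x hxC⟩, hxU⟩
  · rintro ⟨hx, hxU⟩
    obtain ⟨hx1, hx2⟩ := (hmem x).1 hx
    refine ⟨?_, hxU⟩
    by_contra hxC
    have hwcl : w ∈ closure (interior C) := mem_closure_int C hconv hdim hwC
    obtain ⟨z, hzi, hzd⟩ : ∃ z ∈ interior C, dist w z < ε := by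
      have := Metric.mem_closure_iff.1 hwcl ε hε
      obtain ⟨z, hz1, hz2⟩ := this
      exact ⟨z, hz1, hz2⟩
    obtain ⟨t, ht0, ht1, htf⟩ := cross_frontier C hC.isClosed (interior_subset hzi) hxC
    set p := z + t • (x - z) with hp
    have ht0' : 0 < t := by
      rcases eq_or_lt_of_le ht0 with h | h
      · exfalso
        have : p = z := by rw [hp, ← h]; simp
        rw [hC.isClosed.frontier_eq] at htf
        exact htf.2 (this ▸ hzi)
      · exact h
    have hpball : ‖w - p‖ < ε := by
      have hzb : z ∈ Metric.ball w ε := by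
        rw [Metric.mem_ball, dist_comm]; exact hzd
      have hxb : x ∈ Metric.ball w ε := hxU
      have hpseg : p ∈ segment ℝ z x := by
        refine ⟨1 - t, t, by linarith, ht0, by ring, ?_⟩
        rw [hp]; module
      have := (convex_ball w ε).segment_subset hzb hxb hpseg
      rw [Metric.mem_ball, dist_comm] at this
      rwa [← dist_eq_norm]
    have hlt : ∀ (f : (Fin 2 → ℝ) →L[ℝ] ℝ), (∀ y ∈ interior C, f y < f w) →
        f x ≤ f w → f p < f w := by
      intro f hfi hfx
      have hz' : f z < f w := hfi z hzi
      have hfp : f p = f z + t * (f x - f z) := by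
        rw [hp]; simp only [map_add, map_smul, map_sub, smul_eq_mul]
      nlinarith [mul_pos ht0' (sub_pos.2 hz'), mul_nonneg ht0 (sub_nonneg.2 hfx)]
    rcases hkey p htf hpball with h | h
    · exact absurd h (ne_of_lt (hlt f1 h1i hx1))
    · exact absurd h (ne_of_lt (hlt f2 h2i hx2))

/-- For a compact convex two-dimensional set `C ⊆ ℝ²` and an extreme point `w` of `C`:
unless `C` is locally a polytope at `w`, for every `ε > 0` there is a boundary point `v`
of `C` with `‖w − v‖ < ε` such that the segment joining `w` and `v` does not lie entirely
on the boundary of `C`. -/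
theorem stmt8 (C : Set (Fin 2 → ℝ)) (hC : IsCompact C) (hconv : Convex ℝ C)
    (hdim : (interior C).Nonempty)
    (w : Fin 2 → ℝ) (hw : w ∈ Set.extremePoints ℝ C)
    (hnot : ¬ IsLocallyPolytopeAt C w) :
    ∀ ε > (0 : ℝ), ∃ v ∈ frontier C, ‖w - v‖ < ε ∧ ¬ (segment ℝ w v ⊆ frontier C) := by
  intro ε hε
  by_contra hcon
  push_neg at hcon
  apply hnot
  have hcl : IsClosed C := hC.isClosed
  have hw1 : w ∈ C := hw.1
  have hw2 := hw.2
  have hwni : w ∉ interior C := by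
    intro hwint
    obtain ⟨δ', hδ', hball⟩ := Metric.isOpen_iff.1 isOpen_interior w hwint
    set e : Fin 2 → ℝ := fun _ => δ' / 2 with he
    have hen : ‖e‖ ≤ δ' / 2 := by
      rw [pi_norm_le_iff_of_nonneg (by linarith)]
      intro i
      rw [he, Real.norm_eq_abs, abs_of_pos (by linarith)]
    have h1 : w + e ∈ C := by
      refine interior_subset (hball ?_)
      rw [Metric.mem_ball, dist_eq_norm, add_sub_cancel_left]
      linarith
    have h2 : w - e ∈ C := by
      refine interior_subset (hball ?_)
      rw [Metric.mem_ball, dist_eq_norm]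
      have : w - e - w = -e := by abel
      rw [this, norm_neg]
      linarith
    have hos : w ∈ openSegment ℝ (w + e) (w - e) :=
      ⟨1/2, 1/2, by norm_num, by norm_num, by norm_num, by module⟩
    have hex := hw2 h1 h2 hos
    have : e = 0 := by
      have := hex
      have h' : w + e - w = 0 := by rw [this]; abel
      simpa using h'
    have : (δ' : ℝ) / 2 = 0 := by rw [← show e 0 = δ' / 2 from rfl, this]; rfl
    linarith
  have hwfr : w ∈ frontier C := by rw [hcl.frontier_eq]; exact ⟨hw1, hwni⟩
  have hfrC : frontier C ⊆ C := hcl.frontier_subset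
  have hdisj : ∀ q, q ∈ frontier C → q ∉ interior C := by
    intro q hq
    rw [hcl.frontier_eq] at hq
    exact hq.2
  obtain ⟨f1, f2, h1i, h1c, h2i, h2c, hkey⟩ :
      ∃ f1 f2 : (Fin 2 → ℝ) →L[ℝ] ℝ,
        (∀ x ∈ interior C, f1 x < f1 w) ∧ (∀ x ∈ C, f1 x ≤ f1 w) ∧
        (∀ x ∈ interior C, f2 x < f2 w) ∧ (∀ x ∈ C, f2 x ≤ f2 w) ∧
        ∀ p ∈ frontier C, ‖w - p‖ < ε → f1 p = f1 w ∨ f2 p = f2 w := by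
    by_cases hindep : ∃ v1, v1 ∈ frontier C ∧ ‖w - v1‖ < ε ∧ ∃ v2, v2 ∈ frontier C ∧
        ‖w - v2‖ < ε ∧ (v1 - w) 0 * (v2 - w) 1 - (v1 - w) 1 * (v2 - w) 0 ≠ 0
    · obtain ⟨v1, hv1f, hv1d, v2, hv2f, hv2d, hdet⟩ := hindep
      set u1 : Fin 2 → ℝ := v1 - w with hu1
      set u2 : Fin 2 → ℝ := v2 - w with hu2
      set δ : ℝ := u1 0 * u2 1 - u1 1 * u2 0 with hδ
      have hδne : δ ≠ 0 := hdet
      have hv1C : v1 ∈ C := hfrC hv1f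
      have hv2C : v2 ∈ C := hfrC hv2f
      have hv1eq : w + u1 = v1 := by rw [hu1]; abel
      have hv2eq : w + u2 = v2 := by rw [hu2]; abel
      have hu1ne : u1 ≠ 0 := by
        intro h
        apply hδne
        rw [hδ, h]
        simp
      have hu2ne : u2 ≠ 0 := by
        intro h
        apply hδne
        rw [hδ, h]
        simp
      have hseg1 : segment ℝ w v1 ⊆ frontier C := hcon v1 hv1f hv1d
      have hseg2 : segment ℝ w v2 ⊆ frontier C := hcon v2 hv2f hv2d
      obtain ⟨f1, h1i, h1c, h1z⟩ := seg_support C hconv hdim hcl hw1 hv1C hseg1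
      obtain ⟨f2, h2i, h2c, h2z⟩ := seg_support C hconv hdim hcl hw1 hv2C hseg2
      rw [← hu1] at h1z
      rw [← hu2] at h2z
      have hfr1 : ∀ t : ℝ, 0 < t → t ≤ 1 → w + t • u1 ∈ frontier C := by
        intro t ht0 ht1
        refine hseg1 ⟨1 - t, t, by linarith, ht0.le, by ring, ?_⟩
        rw [← hv1eq]; module
      have hfr2 : ∀ t : ℝ, 0 < t → t ≤ 1 → w + t • u2 ∈ frontier C := by
        intro t ht0 ht1
        refine hseg2 ⟨1 - t, t, by linarith, ht0.le, by ring, ?_⟩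
        rw [← hv2eq]; module
      refine ⟨f1, f2, h1i, h1c, h2i, h2c, ?_⟩
      intro p hpf hpd
      by_cases hpw : p = w
      · left; rw [hpw]
      have hpC : p ∈ C := hfrC hpf
      set u3 : Fin 2 → ℝ := p - w with hu3
      have hpeq : w + u3 = p := by rw [hu3]; abel
      have hseg3 : segment ℝ w p ⊆ frontier C := hcon p hpf hpd
      have hfr3 : ∀ t : ℝ, 0 < t → t ≤ 1 → w + t • u3 ∈ frontier C := by
        intro t ht0 ht1
        refine hseg3 ⟨1 - t, t, by linarith, ht0.le, by ring, ?_⟩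
        rw [← hpeq]; module
      set a : ℝ := (u3 0 * u2 1 - u3 1 * u2 0) / δ with hadef
      set b : ℝ := (u1 0 * u3 1 - u1 1 * u3 0) / δ with hbdef
      have hu3ab : u3 = a • u1 + b • u2 := by
        funext i
        have h0' : (u1 0 * u2 1 - u1 1 * u2 0) ≠ 0 := hδ ▸ hδne
        rw [hadef, hbdef, hδ]
        simp only [Pi.add_apply, Pi.smul_apply, smul_eq_mul]
        fin_cases i <;> simp only [Fin.zero_eta, Fin.mk_one] <;>
          rw [div_mul_eq_mul_div, div_mul_eq_mul_div, ← add_div, eq_div_iff h0'] <;> ring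
      have hd32 : u3 0 * u2 1 - u3 1 * u2 0 = a * δ := by
        rw [hu3ab]
        simp only [Pi.add_apply, Pi.smul_apply, smul_eq_mul, hδ]
        ring
      have hd13 : u1 0 * u3 1 - u1 1 * u3 0 = b * δ := by
        rw [hu3ab]
        simp only [Pi.add_apply, Pi.smul_apply, smul_eq_mul, hδ]
        ring
      rcases lt_trichotomy a 0 with ha | ha | ha <;> rcases lt_trichotomy b 0 with hb | hb | hb
      · -- a < 0, b < 0 : extreme point contradiction via -u1
        exfalso
        have hane : a ≠ 0 := ne_of_lt ha
        obtain ⟨t, ht0, ht1, hti⟩ := pt_interior_triangle C hconv w u3 u2 hw1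
          (hpeq ▸ hpC) (hv2eq ▸ hv2C)
          (by rw [hd32]; exact mul_ne_zero hane hδne)
          (a := -1/a) (b := b/a) (div_pos_of_neg_of_neg (by norm_num) ha) (div_pos_of_neg_of_neg hb ha)
        have hcomb : (-1/a) • u3 + (b/a) • u2 = -u1 := by
          rw [hu3ab]
          funext i
          simp only [Pi.add_apply, Pi.smul_apply, Pi.neg_apply, smul_eq_mul]
          field_simp <;> ring
        rw [hcomb] at hti
        have hin : w + t • (-u1) ∈ C := interior_subset hti
        have hfr' : w + t • u1 ∈ C := hfrC (hfr1 t ht0 ht1)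
        have hos : w ∈ openSegment ℝ (w + t • (-u1)) (w + t • u1) :=
          ⟨1/2, 1/2, by norm_num, by norm_num, by norm_num, by module⟩
        have hex := hw2 hin hfr' hos
        have : t • u1 = 0 := by
          have h' := hw2 hfr' hin (by rwa [openSegment_symm])
          have : w + t • u1 - w = 0 := by rw [h']; abel
          simpa using this
        rcases smul_eq_zero.1 this with h | h
        · exact ht0.ne' h
        · exact hu1ne h
      · -- a < 0, b = 0 : p and v1 on opposite sides of w
        exfalso
        have h1a : (1:ℝ) - a ≠ 0 := by linarith
        have hco : (1/(1-a)) • p + (-a/(1-a)) • v1 = w := by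
          rw [← hpeq, ← hv1eq, hu3ab, hb]
          funext i
          simp only [Pi.add_apply, Pi.smul_apply, smul_eq_mul, zero_smul, add_zero,
            Pi.zero_apply]
          field_simp <;> ring
        have hos : w ∈ openSegment ℝ p v1 :=
          ⟨1/(1-a), -a/(1-a), div_pos one_pos (by linarith),
            div_pos (by linarith) (by linarith), by field_simp; ring, hco⟩
        exact hpw (hw2 hpC hv1C hos)
      · -- a < 0, b > 0 : u2 in open cone of u1, u3
        exfalso
        have hbne : b ≠ 0 := ne_of_gt hb
        obtain ⟨t, ht0, ht1, hti⟩ := pt_interior_triangle C hconv w u1 u3 hw1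
          (hv1eq ▸ hv1C) (hpeq ▸ hpC)
          (by rw [hd13]; exact mul_ne_zero hbne hδne)
          (a := -a/b) (b := 1/b) (div_pos (by linarith) hb) (by positivity)
        have hcomb : (-a/b) • u1 + (1/b) • u3 = u2 := by
          rw [hu3ab]
          funext i
          simp only [Pi.add_apply, Pi.smul_apply, smul_eq_mul]
          field_simp <;> ring
        rw [hcomb] at hti
        exact hdisj _ (hfr2 t ht0 ht1) hti
      · -- a = 0, b < 0 : p and v2 on opposite sides of w
        exfalso
        have h1b : (1:ℝ) - b ≠ 0 := by linarith
        have hco : (1/(1-b)) • p + (-b/(1-b)) • v2 = w := by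
          rw [← hpeq, ← hv2eq, hu3ab, ha]
          funext i
          simp only [Pi.add_apply, Pi.smul_apply, smul_eq_mul, zero_smul, zero_add,
            Pi.zero_apply]
          field_simp <;> ring
        have hos : w ∈ openSegment ℝ p v2 :=
          ⟨1/(1-b), -b/(1-b), div_pos one_pos (by linarith),
            div_pos (by linarith) (by linarith), by field_simp; ring, hco⟩
        exact hpw (hw2 hpC hv2C hos)
      · -- a = 0, b = 0 : p = w, contradiction
        exfalso
        apply hpw
        have : u3 = 0 := by rw [hu3ab, ha, hb]; simp
        have : p - w = 0 := by rw [← hu3]; exact this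
        exact sub_eq_zero.1 this
      · -- a = 0, b > 0 : p on ray of u2
        right
        have hz3 : f2 u3 = 0 := by
          rw [hu3ab, ha]
          simp [h2z]
        have := map_sub f2 p w
        rw [← hu3, hz3] at this
        linarith [this.symm]
      · -- a > 0, b < 0 : u1 in open cone of u3, u2
        exfalso
        have hane : a ≠ 0 := ne_of_gt ha
        obtain ⟨t, ht0, ht1, hti⟩ := pt_interior_triangle C hconv w u3 u2 hw1
          (hpeq ▸ hpC) (hv2eq ▸ hv2C)
          (by rw [hd32]; exact mul_ne_zero hane hδne)
          (a := 1/a) (b := -b/a) (by positivity) (div_pos (by linarith) ha)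
        have hcomb : (1/a) • u3 + (-b/a) • u2 = u1 := by
          rw [hu3ab]
          funext i
          simp only [Pi.add_apply, Pi.smul_apply, smul_eq_mul]
          field_simp <;> ring
        rw [hcomb] at hti
        exact hdisj _ (hfr1 t ht0 ht1) hti
      · -- a > 0, b = 0 : p on ray of u1
        left
        have hz3 : f1 u3 = 0 := by
          rw [hu3ab, hb]
          simp [h1z]
        have := map_sub f1 p w
        rw [← hu3, hz3] at this
        linarith [this.symm]
      · -- a > 0, b > 0 : interior point on segment w p
        exfalso
        obtain ⟨t, ht0, ht1, hti⟩ := pt_interior_triangle C hconv w u1 u2 hw1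
          (hv1eq ▸ hv1C) (hv2eq ▸ hv2C) hδne (a := a) (b := b) ha hb
        rw [← hu3ab] at hti
        exact hdisj _ (hfr3 t ht0 ht1) hti
    · push_neg at hindep
      by_cases hone : ∃ v1, v1 ∈ frontier C ∧ ‖w - v1‖ < ε ∧ v1 ≠ w
      · obtain ⟨v1, hv1f, hv1d, hv1w⟩ := hone
        have hv1C : v1 ∈ C := hfrC hv1f
        have hseg1 : segment ℝ w v1 ⊆ frontier C := hcon v1 hv1f hv1d
        obtain ⟨f, hfi, hfc, hfz⟩ := seg_support C hconv hdim hcl hw1 hv1C hseg1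
        refine ⟨f, f, hfi, hfc, hfi, hfc, ?_⟩
        intro p hpf hpd
        left
        have hdet0 := hindep v1 hv1f hv1d p hpf hpd
        have hu1ne : v1 - w ≠ 0 := sub_ne_zero.2 hv1w
        obtain ⟨t, ht0', ht1'⟩ : ∃ t : ℝ, (p - w) 0 = t * (v1 - w) 0 ∧
            (p - w) 1 = t * (v1 - w) 1 := by
          by_cases h0 : (v1 - w) 0 = 0
          · have h1 : (v1 - w) 1 ≠ 0 := by
              intro h1
              apply hu1ne
              funext i
              fin_cases i
              · exact h0
              · exact h1
            refine ⟨(p - w) 1 / (v1 - w) 1, ?_, ?_⟩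
            · have h' : (v1 - w) 1 * (p - w) 0 = 0 := by
                linear_combination -hdet0 + (p - w) 1 * h0
              have hz0 : (p - w) 0 = 0 := by
                rcases mul_eq_zero.1 h' with h | h
                · exact absurd h h1
                · exact h
              rw [hz0, h0, mul_zero]
            · rw [div_mul_cancel₀ _ h1]
          · refine ⟨(p - w) 0 / (v1 - w) 0, ?_, ?_⟩
            · rw [div_mul_cancel₀ _ h0]
            · rw [div_mul_eq_mul_div, eq_div_iff h0]
              linear_combination hdet0
        have ht : p - w = t • (v1 - w) := by
          funext i
          fin_cases i
          · show (p - w) 0 = (t • (v1 - w)) 0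
            rw [Pi.smul_apply, smul_eq_mul]
            exact ht0'
          · show (p - w) 1 = (t • (v1 - w)) 1
            rw [Pi.smul_apply, smul_eq_mul]
            exact ht1'
        have hfp : f (p - w) = 0 := by rw [ht, map_smul, hfz, smul_zero]
        have := map_sub f p w
        rw [hfp] at this
        linarith [this.symm]
      · push_neg at hone
        obtain ⟨f, hfi, hfc⟩ := support_fun C hconv hdim hwni
        exact ⟨f, f, hfi, hfc, hfi, hfc, fun p hp hpd => Or.inl (by rw [hone p hp hpd])⟩
  exact build_polytope C hC hconv hdim w hw1 hε f1 f2 h1i h1c h2i h2c hkey
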